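/- arXiv:0911.0668 — 3 statements merged into one kernel-verified Lean document; each statement's English description precedes it below -/
import Mathlib

section
/- Let v : ℂ → ℂⁿ be a C¹ map with compact support contained in D and with ‖v(z)‖ ≤ 1 for all z. Let w : D → ℂⁿ be a measurable function satisfying ‖w(z)‖ ≤ (1/10)·‖v(z)‖^{1/2}·min(‖∂v/∂z(z)‖, 1) for all z ∈ D. Then for every τ ≥ 1, ∫_D ‖∂v/∂z̄(z) − w(z)‖² e^{τφ} dA ≥ (τ/80) ∫_D ‖v‖² e^{τφ} dA, where dA is Lebesgue measure on ℂ. -/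
open Complex MeasureTheory Metric Filter Asymptotics Topology

/-- The Wirtinger derivative `∂u/∂z̄ = (1/2)(∂u/∂x + i • ∂u/∂y)`. -/
noncomputable def dbar {E : Type*} [NormedAddCommGroup E] [NormedSpace ℂ E]
    (u : ℂ → E) (z : ℂ) : E :=
  (2⁻¹ : ℝ) • (fderiv ℝ u z 1 + Complex.I • fderiv ℝ u z Complex.I)

/-- The Wirtinger derivative `∂u/∂z = (1/2)(∂u/∂x - i • ∂u/∂y)`. -/
noncomputable def dz {E : Type*} [NormedAddCommGroup E] [NormedSpace ℂ E]
    (u : ℂ → E) (z : ℂ) : E :=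
  (2⁻¹ : ℝ) • (fderiv ℝ u z 1 - Complex.I • fderiv ℝ u z Complex.I)

/-- The weight `φ(x+iy) = x + x²/2`. -/
noncomputable def phi (z : ℂ) : ℝ := z.re + z.re ^ 2 / 2

/-!
Conjugate by the weight: for `u = e^{τφ/2} v` and `α = τ(1 + x)/4 = ∂(τφ/2)/∂z̄` one has
`e^{τφ/2} ∂v/∂z̄ = ∂u/∂z̄ - αu`. Expanding the square,
`∫ ‖∂u/∂z̄ - αu‖² = ∫ ‖∂u/∂z + αu‖² + ∫ (∂α/∂x) ‖u‖²`: the cross terms are `Re⟪∂u/∂x, i ∂u/∂y⟫`,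
an antisymmetric bilinear expression in the first derivatives whose integral vanishes, and
`-α ∂‖u‖²/∂x`, which integrates by parts to `(∂α/∂x) ‖u‖² = (τ/4) ‖u‖²`. This gives the Carleman
estimate `∫ ‖∂v/∂z̄‖² e^{τφ} ≥ (τ/4) ∫ ‖v‖² e^{τφ}`, and on the disc, where `|2α| ≤ τ`, it also
bounds `∫ ‖∂v/∂z‖² e^{τφ}` by `2 ∫ ‖∂v/∂z̄‖² e^{τφ} + 2τ² ∫ ‖v‖² e^{τφ}`. The perturbation is
absorbed pointwise: `‖w‖² ≤ ‖v‖ ‖∂v/∂z‖ / 100 ≤ (τ² ‖v‖² + ‖∂v/∂z‖²) / (200τ)`.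
-/

open scoped Convolution

theorem norm_add_sq_le {V : Type*} [SeminormedAddGroup V] (a b : V) :
    ‖a + b‖ ^ 2 ≤ 2 * ‖a‖ ^ 2 + 2 * ‖b‖ ^ 2 := by
  nlinarith [norm_add_le a b, norm_nonneg (a + b), add_sq_le (a := ‖a‖) (b := ‖b‖)]

theorem integral_norm_sq_mul_le {X V : Type*} [MeasurableSpace X] {μ : Measure X}
    [NormedAddCommGroup V] {f g : X → V} {ρ : X → ℝ} (hρ : ∀ x, 0 ≤ ρ x)
    (hfg : AEStronglyMeasurable (fun x => ‖f x - g x‖ ^ 2 * ρ x) μ)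
    (hf : Integrable (fun x => ‖f x‖ ^ 2 * ρ x) μ) (hg : Integrable (fun x => ‖g x‖ ^ 2 * ρ x) μ) :
    ∫ x, ‖f x‖ ^ 2 * ρ x ∂μ
      ≤ 2 * (∫ x, ‖f x - g x‖ ^ 2 * ρ x ∂μ) + 2 * ∫ x, ‖g x‖ ^ 2 * ρ x ∂μ := by
  have hfg_int : Integrable (fun x => ‖f x - g x‖ ^ 2 * ρ x) μ := by
    refine ((hf.const_mul 2).add (hg.const_mul 2)).mono' hfg (Eventually.of_forall fun x => ?_)
    have h := norm_add_sq_le (f x) (-g x)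
    rw [← sub_eq_add_neg, norm_neg] at h
    rw [Real.norm_of_nonneg (by positivity [hρ x]), Pi.add_apply]
    nlinarith [mul_le_mul_of_nonneg_right h (hρ x)]
  rw [← integral_const_mul, ← integral_const_mul,
    ← integral_add (hfg_int.const_mul 2) (hg.const_mul 2)]
  refine integral_mono hf ((hfg_int.const_mul 2).add (hg.const_mul 2)) fun x => ?_
  have h := norm_add_sq_le (f x - g x) (g x)
  rw [sub_add_cancel] at h
  nlinarith [mul_le_mul_of_nonneg_right h (hρ x)]

theorem mul_sq_le_of_le_mul_sqrt_mul_min {x a b τ : ℝ} (hx : 0 ≤ x) (ha : 0 ≤ a) (hb : 0 ≤ b)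
    (hτ : 0 ≤ τ) (h : x ≤ 1 / 10 * a ^ (1 / 2 : ℝ) * min b 1) :
    200 * τ * x ^ 2 ≤ τ ^ 2 * a ^ 2 + b ^ 2 := by
  have hsqrt : (a ^ (1 / 2 : ℝ)) ^ 2 = a := by
    rw [← Real.rpow_natCast, ← Real.rpow_mul ha]
    norm_num
  have hmin : min b 1 ^ 2 ≤ b := by
    nlinarith [min_le_left b 1, min_le_right b 1, le_min hb zero_le_one]
  have hx2 : x ^ 2 ≤ a * b / 100 :=
    calc x ^ 2 ≤ (1 / 10 * a ^ (1 / 2 : ℝ) * min b 1) ^ 2 := pow_le_pow_left₀ hx h 2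
      _ = a * min b 1 ^ 2 / 100 := by rw [mul_pow, mul_pow, hsqrt]; ring
      _ ≤ a * b / 100 := by gcongr
  nlinarith [sq_nonneg (τ * a - b), mul_le_mul_of_nonneg_left hx2 hτ]

theorem integrable_bilinear_of_hasCompactSupport_left {X F G : Type*} [TopologicalSpace X]
    [MeasurableSpace X] [OpensMeasurableSpace X] {μ : Measure X} [IsFiniteMeasureOnCompacts μ]
    [NormedAddCommGroup F] [NormedSpace ℝ F] [NormedAddCommGroup G] [NormedSpace ℝ G]
    (B : F →L[ℝ] F →L[ℝ] G) {f g : X → F} (hf : Continuous f) (hg : Continuous g)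
    (hcf : HasCompactSupport f) : Integrable (fun x => B (f x) (g x)) μ :=
  (B.continuous₂.comp₂ hf hg).integrable_of_hasCompactSupport
    (hcf.mono fun x hx h0 => hx (by simp [h0]))

theorem HasFDerivAt.eq_zero_of_comp_neg_eq {E G : Type*} [NormedAddCommGroup E]
    [NormedSpace ℝ E] [NormedAddCommGroup G] [NormedSpace ℝ G] {f : E → G} {f' : E →L[ℝ] G}
    (hf : HasFDerivAt f f' 0) (heven : f ∘ Neg.neg = f) : f' = 0 := by
  have hneg := (neg_zero (G := E) ▸ hf).comp (0 : E) (-ContinuousLinearMap.id ℝ E).hasFDerivAt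
  rw [heven] at hneg
  ext v
  have h := congr($(hf.unique hneg) v)
  simp only [ContinuousLinearMap.comp_apply, neg_apply, ContinuousLinearMap.id_apply,
    map_neg] at h
  rw [eq_neg_iff_add_eq_zero, ← two_smul ℝ, smul_eq_zero] at h
  simpa using h

section HaarMeasure

variable {E F G : Type*} [NormedAddCommGroup E] [NormedSpace ℝ E] [FiniteDimensional ℝ E]
  [MeasurableSpace E] [BorelSpace E] {μ : Measure E} [μ.IsAddHaarMeasure]
  [NormedAddCommGroup F] [NormedSpace ℝ F]

theorem integral_fderiv_apply_eq_zero {g : E → ℝ} (hg : ContDiff ℝ 1 g)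
    (hc : HasCompactSupport g) (v : E) : ∫ x, fderiv ℝ g x v ∂μ = 0 := by
  have hdg := (hg.continuous_fderiv one_ne_zero).clm_apply (continuous_const (y := v))
  simpa using integral_mul_fderiv_eq_neg_fderiv_mul_of_integrable (μ := μ)
    (f := fun _ => (1 : ℝ)) (g := g) (v := v) (by simp)
    (by simpa using hdg.integrable_of_hasCompactSupport (hc.fderiv_apply (𝕜 := ℝ) v))
    (by simpa using hg.continuous.integrable_of_hasCompactSupport hc)
    (fun x _ => differentiableAt_const _) (fun x _ => hg.differentiable one_ne_zero x)

variable [NormedAddCommGroup G] [NormedSpace ℝ G] {B : F →L[ℝ] F →L[ℝ] G}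
  {u : E → F}

theorem integral_bilinear_comp_add_neg_fderiv (hB : ∀ x y, B x y = -B y x)
    (hu : ContDiff ℝ 1 u) (hc : HasCompactSupport u) (x e : E) :
    ∫ t, B (u (t + -x)) (fderiv ℝ u t e) ∂μ = ∫ t, B (u (t + x)) (fderiv ℝ u t e) ∂μ := by
  have hshift : HasCompactSupport fun t => u (t + -x) :=
    hc.comp_homeomorph (Homeomorph.addRight (-x))
  have hdu : Continuous (fderiv ℝ u · e) :=
    (hu.continuous_fderiv one_ne_zero).clm_apply continuous_const
  have hdiff := hu.differentiable one_ne_zero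
  have hcont : Continuous fun t => u (t + -x) := hu.continuous.comp (continuous_add_const _)
  have ibp := integral_bilinear_fderiv_right_eq_neg_left_of_integrable (μ := μ) (B := B)
    (f := fun t => u (t + -x)) (g := u) (v := e)
    (integrable_bilinear_of_hasCompactSupport_left B
      (by simp only [fderiv_comp_add_right]; exact hdu.comp (continuous_add_const (-x)))
      hu.continuous (hshift.fderiv_apply (𝕜 := ℝ) e))
    (integrable_bilinear_of_hasCompactSupport_left B hcont hdu hshift)
    (integrable_bilinear_of_hasCompactSupport_left B hcont hu.continuous hshift)
    (fun t _ => (hdiff _).comp t (differentiableAt_id.add_const _)) (fun t _ => hdiff t)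
  simp only [fderiv_comp_add_right] at ibp
  rw [ibp, ← integral_neg, ← integral_add_right_eq_self _ x]
  simp only [add_neg_cancel_right, ← hB]

/-- The function `x ↦ ∫ B (u (t + x)) (∂u/∂e t) dt` is even by
`integral_bilinear_comp_add_neg_fderiv`, and it is a convolution, whose derivative at `0` in the
direction `d` is the integral in question. -/
theorem integral_bilinear_fderiv_fderiv_eq_zero (hB : ∀ x y, B x y = -B y x)
    (hu : ContDiff ℝ 1 u) (hc : HasCompactSupport u) (d e : E) :
    ∫ z, B (fderiv ℝ u z d) (fderiv ℝ u z e) ∂μ = 0 := by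
  set f : E → F := fun t => fderiv ℝ u (-t) e
  have hf : Continuous f :=
    ((hu.continuous_fderiv one_ne_zero).clm_apply continuous_const).comp continuous_neg
  have hJ := hc.hasFDerivAt_convolution_right B.flip (μ := μ) hf.locallyIntegrable hu 0
  have hJ_apply (x : E) :
      (f ⋆[B.flip, μ] u) x = ∫ t, B (u (t + x)) (fderiv ℝ u t e) ∂μ := by
    rw [convolution_def, ← integral_neg_eq_self]
    simp [f, sub_eq_add_neg, add_comm]
  have hJ_even : (f ⋆[B.flip, μ] u) ∘ Neg.neg = f ⋆[B.flip, μ] u := by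
    ext x
    simp only [Function.comp_apply, hJ_apply, integral_bilinear_comp_add_neg_fderiv hB hu hc]
  have h := congr($(hJ.eq_zero_of_comp_neg_eq hJ_even) d)
  rw [convolution_precompR_apply B.flip hf.locallyIntegrable (hc.fderiv (𝕜 := ℝ))
    (hu.continuous_fderiv one_ne_zero), convolution_def, ← integral_neg_eq_self] at h
  simpa [f] using h

end HaarMeasure

section Wirtinger

variable {E : Type*} [NormedAddCommGroup E] [NormedSpace ℂ E] {u : ℂ → E} {z : ℂ}

theorem dbar_smul {g : ℂ → ℂ} (hg : DifferentiableAt ℝ g z) (hu : DifferentiableAt ℝ u z) :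
    dbar (fun z => g z • u z) z = g z • dbar u z + dbar g z • u z := by
  simp only [dbar, fderiv_fun_smul hg hu, add_apply, FunLike.coe_smul, Pi.smul_apply,
    ContinuousLinearMap.smulRight_apply, ← coe_smul]
  match_scalars <;> ring

theorem dz_smul {g : ℂ → ℂ} (hg : DifferentiableAt ℝ g z) (hu : DifferentiableAt ℝ u z) :
    dz (fun z => g z • u z) z = g z • dz u z + dz g z • u z := by
  simp only [dz, fderiv_fun_smul hg hu, add_apply, FunLike.coe_smul, Pi.smul_apply,
    ContinuousLinearMap.smulRight_apply, ← coe_smul]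
  match_scalars <;> ring

theorem HasDerivAt.hasFDerivAt_comp_re {h : ℝ → ℝ} {h' : ℝ} (hh : HasDerivAt h h' z.re) :
    HasFDerivAt (fun z : ℂ => h z.re) (h' • reCLM) z :=
  hh.comp_hasFDerivAt z reCLM.hasFDerivAt

theorem hasFDerivAt_ofReal_comp_re {h : ℝ → ℝ} {h' : ℝ} (hh : HasDerivAt h h' z.re) :
    HasFDerivAt (fun z : ℂ => (h z.re : ℂ)) (ofRealCLM.comp (h' • reCLM)) z :=
  ofRealCLM.hasFDerivAt.comp z hh.hasFDerivAt_comp_re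

theorem dbar_ofReal_comp_re {h : ℝ → ℝ} {h' : ℝ} (hh : HasDerivAt h h' z.re) :
    dbar (fun z : ℂ => (h z.re : ℂ)) z = ((h' / 2 : ℝ) : ℂ) := by
  simp [dbar, (hasFDerivAt_ofReal_comp_re hh).fderiv, div_eq_inv_mul]

theorem dz_ofReal_comp_re {h : ℝ → ℝ} {h' : ℝ} (hh : HasDerivAt h h' z.re) :
    dz (fun z : ℂ => (h z.re : ℂ)) z = ((h' / 2 : ℝ) : ℂ) := by
  simp [dz, (hasFDerivAt_ofReal_comp_re hh).fderiv, div_eq_inv_mul]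

theorem dbar_of_notMem_tsupport (h : z ∉ tsupport u) : dbar u z = 0 := by
  simp [dbar, fderiv_of_notMem_tsupport ℝ h]

theorem dz_of_notMem_tsupport (h : z ∉ tsupport u) : dz u z = 0 := by
  simp [dz, fderiv_of_notMem_tsupport ℝ h]

theorem HasCompactSupport.dbar (hc : HasCompactSupport u) : HasCompactSupport (dbar u) :=
  hc.mono' <| Function.support_subset_iff'.2 fun _ => dbar_of_notMem_tsupport

theorem HasCompactSupport.dz (hc : HasCompactSupport u) : HasCompactSupport (dz u) :=
  hc.mono' <| Function.support_subset_iff'.2 fun _ => dz_of_notMem_tsupport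

theorem ContDiff.continuous_dbar (hu : ContDiff ℝ 1 u) : Continuous (dbar u) := by
  have := hu.continuous_fderiv one_ne_zero
  unfold dbar
  fun_prop

theorem ContDiff.continuous_dz (hu : ContDiff ℝ 1 u) : Continuous (dz u) := by
  have := hu.continuous_fderiv one_ne_zero
  unfold dz
  fun_prop

end Wirtinger

theorem Continuous.integrable_norm_sq_mul_exp_phi {V : Type*} [NormedAddCommGroup V]
    {u : ℂ → V} (hu : Continuous u) (hc : HasCompactSupport u) (τ : ℝ) :
    Integrable fun z => ‖u z‖ ^ 2 * Real.exp (τ * phi z) := by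
  have hphi : Continuous phi := by unfold phi; fun_prop
  exact (by fun_prop : Continuous _).integrable_of_hasCompactSupport <| hc.mono' <|
    Function.support_subset_iff'.2 fun z hz => by simp [image_eq_zero_of_notMem_tsupport hz]

section Hermitian

variable {E : Type*} [NormedAddCommGroup E] [InnerProductSpace ℂ E]

noncomputable def reInnerI : E →L[ℝ] E →L[ℝ] ℝ :=
  letI := InnerProductSpace.complexToReal (G := E)
  (innerSL ℝ).bilinearComp (ContinuousLinearMap.id ℝ E)
    ((Complex.I • ContinuousLinearMap.id ℂ E).restrictScalars ℝ)

theorem reInnerI_apply (x y : E) : reInnerI x y = (inner ℂ x (I • y)).re := rfl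

theorem reInnerI_antisymm (x y : E) : reInnerI x y = -reInnerI y x := by
  rw [reInnerI_apply, reInnerI_apply, inner_smul_right, inner_smul_right, ← inner_conj_symm x y]
  simp only [mul_re, conj_re, conj_im, I_re, I_im]
  ring

theorem norm_half_add_I_smul_sub_smul_sq (c : ℝ) (p q m : E) :
    ‖(2⁻¹ : ℝ) • (p + I • q) - c • m‖ ^ 2
      = ‖(2⁻¹ : ℝ) • (p - I • q) + c • m‖ ^ 2 + reInnerI p q - 2 * c * (inner ℂ m p).re := by
  simp only [@norm_sq_eq_re_inner ℂ, RCLike.re_to_complex, reInnerI_apply, ← coe_smul]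
  simp only [inner_sub_left, inner_sub_right, inner_add_left, inner_add_right,
    inner_smul_left, inner_smul_right, conj_ofReal, conj_I, ← inner_conj_symm p q,
    ← inner_conj_symm p m, ← inner_conj_symm q m]
  simp only [add_re, sub_re, mul_re, mul_im, conj_re, conj_im, I_re, I_im, ofReal_re,
    ofReal_im, add_im, sub_im, neg_re, neg_im]
  ring

theorem fderiv_mul_norm_sq_apply {F : Type*} [NormedAddCommGroup F] [NormedSpace ℝ F]
    {α : F → ℝ} {u : F → E} {x : F} (hα : DifferentiableAt ℝ α x)
    (hu : DifferentiableAt ℝ u x) (d : F) :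
    fderiv ℝ (fun x => α x * ‖u x‖ ^ 2) x d
      = fderiv ℝ α x d * ‖u x‖ ^ 2 + 2 * α x * (inner ℂ (u x) (fderiv ℝ u x d)).re := by
  let _ : InnerProductSpace ℝ E := InnerProductSpace.complexToReal
  rw [(hα.hasFDerivAt.fun_mul hu.hasFDerivAt.norm_sq).fderiv]
  simp only [add_apply, smul_apply, ContinuousLinearMap.comp_apply, coe_innerSL_apply,
    real_inner_eq_re_inner, RCLike.re_to_complex, nsmul_eq_mul, Nat.cast_ofNat, smul_eq_mul]
  ring

theorem norm_dbar_sub_smul_sq {u : ℂ → E} {α : ℂ → ℝ} {z : ℂ} (hu : DifferentiableAt ℝ u z)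
    (hα : DifferentiableAt ℝ α z) :
    ‖dbar u z - α z • u z‖ ^ 2 = ‖dz u z + α z • u z‖ ^ 2
      + reInnerI (fderiv ℝ u z 1) (fderiv ℝ u z I) + fderiv ℝ α z 1 * ‖u z‖ ^ 2
      - fderiv ℝ (fun z => α z * ‖u z‖ ^ 2) z 1 := by
  rw [fderiv_mul_norm_sq_apply hα hu, dbar, dz, norm_half_add_I_smul_sub_smul_sq]
  ring

theorem integral_norm_dbar_sub_smul_sq {u : ℂ → E} (hu : ContDiff ℝ 1 u)
    (hc : HasCompactSupport u) {α : ℂ → ℝ} (hα : ContDiff ℝ 1 α) :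
    ∫ z, ‖dbar u z - α z • u z‖ ^ 2
      = (∫ z, ‖dz u z + α z • u z‖ ^ 2) + ∫ z, fderiv ℝ α z 1 * ‖u z‖ ^ 2 := by
  have hdu := hu.continuous_fderiv one_ne_zero
  have hdα := hα.continuous_fderiv one_ne_zero
  have hdz := hu.continuous_dz
  have hN : ContDiff ℝ 1 fun z => α z * ‖u z‖ ^ 2 := hα.mul (hu.norm_sq ℂ)
  have hN_deriv (z : ℂ) := fderiv_mul_norm_sq_apply (hα.differentiable one_ne_zero z)
    (hu.differentiable one_ne_zero z) 1
  have hpt (z : ℂ) := norm_dbar_sub_smul_sq (hu.differentiable one_ne_zero z)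
    (hα.differentiable one_ne_zero z)
  have hsupp {f : ℂ → ℝ} (h : ∀ z, u z = 0 → fderiv ℝ u z = 0 → f z = 0) :
      HasCompactSupport f :=
    hc.mono' <| Function.support_subset_iff'.2 fun z hz =>
      h z (image_eq_zero_of_notMem_tsupport hz) (fderiv_of_notMem_tsupport ℝ hz)
  have hint {f : ℂ → ℝ} (hf : Continuous f) (h : ∀ z, u z = 0 → fderiv ℝ u z = 0 → f z = 0) :
      Integrable f :=
    hf.integrable_of_hasCompactSupport (hsupp h)
  have i1 : Integrable fun z => ‖dz u z + α z • u z‖ ^ 2 :=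
    hint (by fun_prop) fun z h0 h1 => by simp [h0, h1, dz]
  have i2 : Integrable fun z => reInnerI (fderiv ℝ u z 1) (fderiv ℝ u z I) :=
    hint (by fun_prop) fun z _ h1 => by simp [h1]
  have i3 : Integrable fun z => fderiv ℝ α z 1 * ‖u z‖ ^ 2 :=
    hint (by fun_prop) fun z h0 _ => by simp [h0]
  have i4 : Integrable fun z => fderiv ℝ (fun z => α z * ‖u z‖ ^ 2) z 1 :=
    hint ((hN.continuous_fderiv one_ne_zero).clm_apply continuous_const)
      fun z h0 h1 => by simp [hN_deriv, h0, h1]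
  rw [integral_congr_ae (Eventually.of_forall hpt), integral_sub _ i4, integral_add _ i3,
    integral_add i1 i2, integral_bilinear_fderiv_fderiv_eq_zero reInnerI_antisymm hu hc,
    integral_fderiv_apply_eq_zero hN (hsupp fun z h0 _ => by simp [h0]), add_zero, sub_zero]
  exacts [i1.add i2, (i1.add i2).add i3]

theorem integral_norm_dbar_sq_mul_exp_phi (τ : ℝ) {v : ℂ → E} (hv : ContDiff ℝ 1 v)
    (hc : HasCompactSupport v) :
    ∫ z, ‖dbar v z‖ ^ 2 * Real.exp (τ * phi z)
      = (∫ z, ‖dz v z + (τ * (1 + z.re) / 2) • v z‖ ^ 2 * Real.exp (τ * phi z))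
        + τ / 4 * ∫ z, ‖v z‖ ^ 2 * Real.exp (τ * phi z) := by
  set h : ℝ → ℝ := fun x => Real.exp (τ * (x + x ^ 2 / 2) / 2)
  have hh (x : ℝ) : HasDerivAt h (h x * (τ * (1 + x) / 2)) x := by
    have := ((((hasDerivAt_id x).fun_add ((hasDerivAt_pow 2 x).div_const 2)).const_mul
      τ).div_const 2).exp
    exact this.congr_deriv (by simp [h])
  have hre : ContDiff ℝ 1 fun z : ℂ => z.re := reCLM.contDiff
  have hofReal : ContDiff ℝ 1 fun x : ℝ => (x : ℂ) := ofRealCLM.contDiff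
  have hg : ContDiff ℝ 1 fun z : ℂ => (h z.re : ℂ) := by
    unfold h
    fun_prop
  have hdiff (z : ℂ) := hg.differentiable one_ne_zero z
  have hvd (z : ℂ) := hv.differentiable one_ne_zero z
  have hdbar (z : ℂ) : dbar (fun z => (h z.re : ℂ) • v z) z
      - (τ * (1 + z.re) / 4) • ((h z.re : ℂ) • v z) = (h z.re : ℂ) • dbar v z := by
    rw [dbar_smul (hdiff z) (hvd z), dbar_ofReal_comp_re (hh _)]
    match_scalars <;> (push_cast [coe_algebraMap]; ring)
  have hdz (z : ℂ) : dz (fun z => (h z.re : ℂ) • v z) z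
      + (τ * (1 + z.re) / 4) • ((h z.re : ℂ) • v z)
      = (h z.re : ℂ) • (dz v z + (τ * (1 + z.re) / 2) • v z) := by
    rw [dz_smul (hdiff z) (hvd z), dz_ofReal_comp_re (hh _)]
    match_scalars <;> (push_cast [coe_algebraMap]; ring)
  have hα (z : ℂ) : fderiv ℝ (fun z : ℂ => τ * (1 + z.re) / 4) z 1 = τ / 4 := by
    have := ((((hasDerivAt_id' z.re).const_add 1).const_mul τ).div_const 4).hasFDerivAt_comp_re
    simp [this.fderiv]
  have hnorm (z : ℂ) (x : E) : ‖(h z.re : ℂ) • x‖ ^ 2 = ‖x‖ ^ 2 * Real.exp (τ * phi z) := by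
    rw [norm_smul, norm_real, Real.norm_of_nonneg (Real.exp_pos _).le, mul_pow,
      ← Real.exp_nat_mul]
    simp only [phi]
    ring_nf
  have key := integral_norm_dbar_sub_smul_sq (u := fun z => (h z.re : ℂ) • v z) (hg.smul hv)
    hc.smul_left (by fun_prop : ContDiff ℝ 1 fun z : ℂ => τ * (1 + z.re) / 4)
  simp only [hdbar, hdz, hα, hnorm] at key
  rw [key, integral_const_mul]

theorem carleman_estimate (τ : ℝ) {v : ℂ → E} (hv : ContDiff ℝ 1 v) (hc : HasCompactSupport v) :
    τ / 4 * ∫ z, ‖v z‖ ^ 2 * Real.exp (τ * phi z)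
      ≤ ∫ z, ‖dbar v z‖ ^ 2 * Real.exp (τ * phi z) := by
  have hQ : 0 ≤ ∫ z, ‖dz v z + (τ * (1 + z.re) / 2) • v z‖ ^ 2 * Real.exp (τ * phi z) :=
    integral_nonneg fun z => by positivity
  rw [integral_norm_dbar_sq_mul_exp_phi τ hv hc]
  linarith

theorem integral_norm_dz_sq_mul_exp_phi_le {τ : ℝ} (hτ : 0 ≤ τ) {v : ℂ → E}
    (hv : ContDiff ℝ 1 v) (hc : HasCompactSupport v) (hsub : tsupport v ⊆ ball 0 1) :
    ∫ z, ‖dz v z‖ ^ 2 * Real.exp (τ * phi z)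
      ≤ 2 * (∫ z, ‖dbar v z‖ ^ 2 * Real.exp (τ * phi z))
        + 2 * τ ^ 2 * ∫ z, ‖v z‖ ^ 2 * Real.exp (τ * phi z) := by
  set c : ℂ → ℝ := fun z => τ * (1 + z.re) / 2
  have hcont : Continuous c := by fun_prop
  have iQ : Integrable fun z => ‖dz v z + c z • v z‖ ^ 2 * Real.exp (τ * phi z) :=
    (hv.continuous_dz.add (hcont.smul hv.continuous)).integrable_norm_sq_mul_exp_phi
      (hc.dz.add hc.smul_left) τ
  have iV := hv.continuous.integrable_norm_sq_mul_exp_phi hc τ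
  have hpt (z : ℂ) : ‖dz v z‖ ^ 2 * Real.exp (τ * phi z)
      ≤ 2 * (‖dz v z + c z • v z‖ ^ 2 * Real.exp (τ * phi z))
        + 2 * τ ^ 2 * (‖v z‖ ^ 2 * Real.exp (τ * phi z)) := by
    have hc2 : c z ^ 2 * ‖v z‖ ^ 2 ≤ τ ^ 2 * ‖v z‖ ^ 2 := by
      rcases eq_or_ne (v z) 0 with h0 | h0
      · simp [h0]
      have hz : ‖z‖ < 1 := mem_ball_zero_iff.1 (hsub (subset_tsupport v h0))
      have hre := abs_lt.1 ((abs_re_le_norm z).trans_lt hz)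
      gcongr <;> simp only [c] <;> nlinarith [hre.1, hre.2]
    have h := norm_add_sq_le (dz v z + c z • v z) (-(c z • v z))
    rw [add_neg_cancel_right, norm_neg, norm_smul, mul_pow, Real.norm_eq_abs, sq_abs] at h
    nlinarith [Real.exp_pos (τ * phi z)]
  have hQ : 0 ≤ τ / 4 * ∫ z, ‖v z‖ ^ 2 * Real.exp (τ * phi z) := by positivity
  calc _ ≤ ∫ z, (2 * (‖dz v z + c z • v z‖ ^ 2 * Real.exp (τ * phi z))
        + 2 * τ ^ 2 * (‖v z‖ ^ 2 * Real.exp (τ * phi z))) :=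
        integral_mono_of_nonneg (Eventually.of_forall fun z => by positivity)
          ((iQ.const_mul 2).add (iV.const_mul _)) (Eventually.of_forall hpt)
    _ ≤ _ := by
      rw [integral_add (iQ.const_mul 2) (iV.const_mul _), integral_const_mul, integral_const_mul,
        integral_norm_dbar_sq_mul_exp_phi τ hv hc]
      linarith

theorem norm_sq_mul_exp_phi_le_of_le {v w : ℂ → E} {z : ℂ} {τ : ℝ} (hτ : 0 < τ)
    (hwz : ‖w z‖ ≤ (1 / 10) * ‖v z‖ ^ ((1 : ℝ) / 2) * min ‖dz v z‖ 1) :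
    ‖w z‖ ^ 2 * Real.exp (τ * phi z)
      ≤ (τ ^ 2 * (‖v z‖ ^ 2 * Real.exp (τ * phi z)) + ‖dz v z‖ ^ 2 * Real.exp (τ * phi z))
        / (200 * τ) := by
  have := mul_sq_le_of_le_mul_sqrt_mul_min (norm_nonneg _) (norm_nonneg _) (norm_nonneg _)
    hτ.le hwz
  rw [le_div_iff₀ (by positivity)]
  nlinarith [Real.exp_pos (τ * phi z)]

section Perturbation

variable {v w : ℂ → E} {s : Set ℂ} {τ : ℝ}

theorem integrable_norm_sq_add_norm_dz_sq_mul_exp_phi (hv : ContDiff ℝ 1 v) (hc : HasCompactSupport v) (τ : ℝ) :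
    Integrable fun z => (τ ^ 2 * (‖v z‖ ^ 2 * Real.exp (τ * phi z))
      + ‖dz v z‖ ^ 2 * Real.exp (τ * phi z)) / (200 * τ) :=
  (((hv.continuous.integrable_norm_sq_mul_exp_phi hc τ).const_mul (τ ^ 2)).add
    (hv.continuous_dz.integrable_norm_sq_mul_exp_phi hc.dz τ)).div_const (200 * τ)

theorem integrableOn_norm_sq_mul_exp_phi_of_le (hv : ContDiff ℝ 1 v) (hc : HasCompactSupport v)
    (hs : MeasurableSet s) (hw : AEStronglyMeasurable w (volume.restrict s))
    (hwbd : ∀ z ∈ s, ‖w z‖ ≤ (1 / 10) * ‖v z‖ ^ ((1 : ℝ) / 2) * min ‖dz v z‖ 1)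
    (hτ : 0 < τ) : IntegrableOn (fun z => ‖w z‖ ^ 2 * Real.exp (τ * phi z)) s := by
  have hphi : Continuous phi := by unfold phi; fun_prop
  refine (integrable_norm_sq_add_norm_dz_sq_mul_exp_phi hv hc τ).integrableOn.mono' (by fun_prop)
    ((ae_restrict_iff' hs).2 <| Eventually.of_forall fun z hz => ?_)
  rw [Real.norm_of_nonneg (by positivity)]
  exact norm_sq_mul_exp_phi_le_of_le hτ (hwbd z hz)

theorem mul_setIntegral_norm_sq_mul_exp_phi_le (hv : ContDiff ℝ 1 v) (hc : HasCompactSupport v)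
    (hs : MeasurableSet s)
    (hwbd : ∀ z ∈ s, ‖w z‖ ≤ (1 / 10) * ‖v z‖ ^ ((1 : ℝ) / 2) * min ‖dz v z‖ 1)
    (hτ : 0 < τ) :
    200 * τ * ∫ z in s, ‖w z‖ ^ 2 * Real.exp (τ * phi z)
      ≤ τ ^ 2 * (∫ z, ‖v z‖ ^ 2 * Real.exp (τ * phi z))
        + ∫ z, ‖dz v z‖ ^ 2 * Real.exp (τ * phi z) := by
  have iV := hv.continuous.integrable_norm_sq_mul_exp_phi hc τ
  have iD := hv.continuous_dz.integrable_norm_sq_mul_exp_phi hc.dz τ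
  rw [← le_div_iff₀' (by positivity), ← integral_const_mul, ← integral_add (iV.const_mul _) iD,
    ← integral_div]
  calc _ ≤ ∫ z in s, (τ ^ 2 * (‖v z‖ ^ 2 * Real.exp (τ * phi z))
        + ‖dz v z‖ ^ 2 * Real.exp (τ * phi z)) / (200 * τ) :=
        integral_mono_of_nonneg (Eventually.of_forall fun z => by positivity)
          (integrable_norm_sq_add_norm_dz_sq_mul_exp_phi hv hc τ).integrableOn
          ((ae_restrict_iff' hs).2 <| Eventually.of_forall fun z hz =>
            norm_sq_mul_exp_phi_le_of_le hτ (hwbd z hz))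
    _ ≤ _ := setIntegral_le_integral (integrable_norm_sq_add_norm_dz_sq_mul_exp_phi hv hc τ)
        (Eventually.of_forall fun z => by positivity)

theorem setIntegral_norm_dbar_sq_mul_exp_phi_le (hv : ContDiff ℝ 1 v) (hc : HasCompactSupport v)
    (hs : MeasurableSet s) (hw : AEStronglyMeasurable w (volume.restrict s))
    (hwbd : ∀ z ∈ s, ‖w z‖ ≤ (1 / 10) * ‖v z‖ ^ ((1 : ℝ) / 2) * min ‖dz v z‖ 1)
    (hτ : 0 < τ) :
    100 * τ * ∫ z in s, ‖dbar v z‖ ^ 2 * Real.exp (τ * phi z)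
      ≤ 200 * τ * (∫ z in s, ‖dbar v z - w z‖ ^ 2 * Real.exp (τ * phi z))
        + τ ^ 2 * (∫ z, ‖v z‖ ^ 2 * Real.exp (τ * phi z))
        + ∫ z, ‖dz v z‖ ^ 2 * Real.exp (τ * phi z) := by
  have hphi : Continuous phi := by unfold phi; fun_prop
  have hdbar := hv.continuous_dbar
  have hT := integral_norm_sq_mul_le (μ := volume.restrict s) (f := dbar v) (g := w)
    (fun z => (Real.exp_pos (τ * phi z)).le) (by fun_prop)
    (hdbar.integrable_norm_sq_mul_exp_phi hc.dbar τ).integrableOn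
    (integrableOn_norm_sq_mul_exp_phi_of_le hv hc hs hw hwbd hτ)
  nlinarith [mul_le_mul_of_nonneg_left hT (by positivity : (0 : ℝ) ≤ 100 * τ),
    mul_setIntegral_norm_sq_mul_exp_phi_le hv hc hs hwbd hτ]

end Perturbation

end Hermitian

theorem carleman_estimate_perturbed_general (n : ℕ) (v : ℂ → EuclideanSpace ℂ (Fin n))
    (hv : ContDiff ℝ 1 v) (hsupp : HasCompactSupport v)
    (hsub : tsupport v ⊆ ball (0 : ℂ) 1)
    (w : ℂ → EuclideanSpace ℂ (Fin n)) (hw : MeasureTheory.StronglyMeasurable w)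
    (hwbd : ∀ z ∈ ball (0 : ℂ) 1,
      ‖w z‖ ≤ (1 / 10) * ‖v z‖ ^ ((1 : ℝ) / 2) * min ‖dz v z‖ 1)
    (τ : ℝ) (hτ : 1 ≤ τ) :
    (τ / 80) * (∫ z in ball (0 : ℂ) 1, ‖v z‖ ^ 2 * Real.exp (τ * phi z))
      ≤ ∫ z in ball (0 : ℂ) 1, ‖dbar v z - w z‖ ^ 2 * Real.exp (τ * phi z) := by
  have hτ0 : 0 < τ := by linarith
  have hV : ∫ z in ball (0 : ℂ) 1, ‖v z‖ ^ 2 * Real.exp (τ * phi z)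
      = ∫ z, ‖v z‖ ^ 2 * Real.exp (τ * phi z) :=
    setIntegral_eq_integral_of_forall_compl_eq_zero fun z hz => by
      simp [image_eq_zero_of_notMem_tsupport fun h => hz (hsub h)]
  have hcarleman := carleman_estimate τ hv hsupp
  have hdz := integral_norm_dz_sq_mul_exp_phi_le hτ0.le hv hsupp hsub
  have hA : ∫ z in ball (0 : ℂ) 1, ‖dbar v z‖ ^ 2 * Real.exp (τ * phi z)
      = ∫ z, ‖dbar v z‖ ^ 2 * Real.exp (τ * phi z) :=
    setIntegral_eq_integral_of_forall_compl_eq_zero fun z hz => by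
      simp [dbar_of_notMem_tsupport fun h => hz (hsub h)]
  have hpert := setIntegral_norm_dbar_sq_mul_exp_phi_le hv hsupp measurableSet_ball
    hw.aestronglyMeasurable hwbd hτ0
  rw [hA] at hpert
  have hV0 : 0 ≤ ∫ z, ‖v z‖ ^ 2 * Real.exp (τ * phi z) := integral_nonneg fun z => by positivity
  rw [hV]
  refine le_of_mul_le_mul_left ?_ hτ0
  nlinarith [mul_le_mul_of_nonneg_left hcarleman (by linarith : (0 : ℝ) ≤ 100 * τ - 2),
    mul_nonneg (sub_nonneg.2 hτ) (mul_nonneg hτ0.le hV0)]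

/-- Lemma 2: if `v` is `C¹`, compactly supported in the unit disc with
`‖v‖ ≤ 1`, and `w` is measurable with
`‖w(z)‖ ≤ (1/10)·‖v(z)‖^{1/2}·min(‖∂v/∂z(z)‖, 1)` on `D`, then for all `τ ≥ 1`,
`∫ ‖∂v/∂z̄ - w‖² e^{τφ} ≥ (τ/80) ∫ ‖v‖² e^{τφ}`. -/
theorem carleman_estimate_perturbed (n : ℕ) (v : ℂ → EuclideanSpace ℂ (Fin n))
    (hv : ContDiff ℝ 1 v) (hsupp : HasCompactSupport v)
    (hsub : tsupport v ⊆ ball (0 : ℂ) 1)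
    (hvbd : ∀ z, ‖v z‖ ≤ 1)
    (w : ℂ → EuclideanSpace ℂ (Fin n)) (hw : MeasureTheory.StronglyMeasurable w)
    (hwbd : ∀ z ∈ ball (0 : ℂ) 1,
      ‖w z‖ ≤ (1 / 10) * ‖v z‖ ^ ((1 : ℝ) / 2) * min ‖dz v z‖ 1)
    (τ : ℝ) (hτ : 1 ≤ τ) :
    (τ / 80) * (∫ z in ball (0 : ℂ) 1, ‖v z‖ ^ 2 * Real.exp (τ * phi z))
      ≤ ∫ z in ball (0 : ℂ) 1, ‖dbar v z - w z‖ ^ 2 * Real.exp (τ * phi z) :=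
  carleman_estimate_perturbed_general n v hv hsupp hsub w hw hwbd τ hτ
end

section
/- For every integer k ≥ 2 there exists an almost complex structure J on ℂ² that is Hölder continuous with exponent (k−1)/k (i.e. ‖J(p) − J(q)‖ ≤ K·|p−q|^{(k−1)/k} in operator norm for some constant K > 0) such that the two C¹ maps u, v : D → ℂ² defined by u(z) = (z, 0), and v(z) = (z, 0) for Im z ≤ 0 while v(z) = (z, (Im z)^k) for Im z > 0, are both J-holomorphic; in particular u and v agree on the nonempty open set {z ∈ D : Im z < 0} but u ≠ v. -/
/-!
Take `J` of the form `J_c (w₁, w₂) = (i w₁, i w₂ + c · conj w₁)`, which squares to `-1` for every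
real `c`. A map `z ↦ (z, f(Im z))` with `f` real-valued is `J_c`-holomorphic exactly when
`c = f'(Im z)`. For `v` this asks for `c = k (Im z)₊^(k-1) = k (Re w₂)₊^((k-1)/k)` at `w = v(z)`,
and taking that formula as the definition of `c(w)` on all of `ℂ²` gives the structure; `c ≡ 0`
on `u`. The exponent `(k-1)/k ≤ 1` makes `t ↦ t₊^((k-1)/k)` Hölder continuous by subadditivity
of `t ↦ t^α`.
-/

open Complex Metric Filter Topology

/-- The map `u(z) = (z, 0)`. -/
def umap (z : ℂ) : ℂ × ℂ := (z, 0)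

/-- The map `v(z) = (z, 0)` for `Im z ≤ 0` and `v(z) = (z, (Im z)^k)` for `Im z > 0`. -/
noncomputable def vmap (k : ℕ) (z : ℂ) : ℂ × ℂ :=
  (z, if z.im ≤ 0 then 0 else ((z.im : ℂ)) ^ k)

open ComplexConjugate

noncomputable def shearedJ (c : ℝ) : ℂ × ℂ →L[ℝ] ℂ × ℂ :=
  LinearMap.toContinuousLinearMap
    { toFun := fun w => (I * w.1, I * w.2 + c * conj w.1)
      map_add' := fun w w' => by
        simp only [Prod.fst_add, Prod.snd_add, map_add, Prod.mk_add_mk]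
        ring_nf
      map_smul' := fun r w => by
        simp only [Prod.smul_fst, Prod.smul_snd, real_smul, map_mul, conj_ofReal, Prod.smul_mk,
          RingHom.id_apply]
        ring_nf }

lemma shearedJ_apply (c : ℝ) (w : ℂ × ℂ) :
    shearedJ c w = (I * w.1, I * w.2 + c * conj w.1) := rfl

lemma shearedJ_shearedJ (c : ℝ) (w : ℂ × ℂ) : shearedJ c (shearedJ c w) = -w := by
  simp only [shearedJ_apply, map_mul, conj_I, Prod.ext_iff, Prod.fst_neg, Prod.snd_neg]
  constructor <;> ring_nf <;> simp only [I_sq] <;> ring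

lemma norm_shearedJ_sub_le (c c' : ℝ) : ‖shearedJ c - shearedJ c'‖ ≤ |c - c'| := by
  refine ContinuousLinearMap.opNorm_le_bound _ (abs_nonneg _) fun w => ?_
  have hdiff : (shearedJ c - shearedJ c') w = (0, ((c - c' : ℝ) : ℂ) * conj w.1) := by
    simp only [sub_apply, shearedJ_apply, Prod.mk_sub_mk, sub_self, ofReal_sub]
    ring_nf
  rw [hdiff, Prod.norm_mk, norm_zero, norm_mul, RCLike.norm_conj, norm_real, Real.norm_eq_abs,
    max_eq_right (by positivity)]
  gcongr
  exact norm_fst_le w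

lemma abs_rpow_sub_rpow_le {x y α : ℝ} (hx : 0 ≤ x) (hy : 0 ≤ y) (hα₀ : 0 ≤ α) (hα₁ : α ≤ 1) :
    |x ^ α - y ^ α| ≤ |x - y| ^ α := by
  wlog hyx : y ≤ x generalizing x y
  · rw [abs_sub_comm, abs_sub_comm x]
    exact this hy hx (le_of_not_ge hyx)
  have hsub : x ^ α ≤ (x - y) ^ α + y ^ α := by
    simpa using Real.rpow_add_le_add_rpow (sub_nonneg.2 hyx) hy hα₀ hα₁
  rw [abs_of_nonneg (sub_nonneg.2 (Real.rpow_le_rpow hy hyx hα₀)), abs_of_nonneg (sub_nonneg.2 hyx)]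
  linarith

lemma hasDerivAt_max_zero_pow {n : ℕ} (hn : 1 < n) (y : ℝ) :
    HasDerivAt (fun t : ℝ => max t 0 ^ n) (n * max y 0 ^ (n - 1)) y := by
  rcases lt_trichotomy y 0 with hy | rfl | hy
  · have hzero : (fun t : ℝ => max t 0 ^ n) =ᶠ[𝓝 y] fun _ => 0 := by
      filter_upwards [eventually_lt_nhds hy] with t ht
      rw [max_eq_right ht.le, zero_pow (by omega)]
    rw [max_eq_right hy.le, zero_pow (by omega), mul_zero]
    exact (hasDerivAt_const y 0).congr_of_eventuallyEq hzero
  · have hbig : (fun t : ℝ => max t 0 ^ n) =O[𝓝 0] fun t => t ^ n :=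
      Asymptotics.IsBigO.of_bound 1 <| Eventually.of_forall fun t => by
        rw [one_mul, norm_pow, norm_pow]
        gcongr
        rw [Real.norm_eq_abs, Real.norm_eq_abs, abs_of_nonneg (le_max_right _ _)]
        exact max_le (le_abs_self t) (abs_nonneg t)
    rw [hasDerivAt_iff_isLittleO]
    simpa [zero_pow (show n ≠ 0 by omega), zero_pow (show n - 1 ≠ 0 by omega)] using
      hbig.trans_isLittleO (Asymptotics.isLittleO_pow_id hn)
  · have hpow : (fun t : ℝ => max t 0 ^ n) =ᶠ[𝓝 y] fun t => t ^ n := by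
      filter_upwards [eventually_gt_nhds hy] with t ht
      rw [max_eq_left ht.le]
    rw [max_eq_left hy.le]
    exact (hasDerivAt_pow n y).congr_of_eventuallyEq hpow

lemma vmap_eq {k : ℕ} (hk : k ≠ 0) : vmap k = fun z => (z, ((max z.im 0 ^ k : ℝ) : ℂ)) := by
  funext z
  by_cases hz : z.im ≤ 0
  · simp [vmap, hz, zero_pow hk]
  · simp [vmap, hz, max_eq_left (not_le.1 hz).le]

lemma hasFDerivAt_vmap {k : ℕ} (hk : 1 < k) (z : ℂ) :
    HasFDerivAt (vmap k)
      ((ContinuousLinearMap.id ℝ ℂ).prod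
        (ofRealCLM.comp ((k * max z.im 0 ^ (k - 1) : ℝ) • imCLM))) z := by
  rw [vmap_eq (by omega)]
  exact (hasFDerivAt_id z).prodMk <| ofRealCLM.hasFDerivAt.comp z <|
    (hasDerivAt_max_zero_pow hk z.im).comp_hasFDerivAt z imCLM.hasFDerivAt

lemma hasFDerivAt_umap (z : ℂ) : HasFDerivAt umap ((ContinuousLinearMap.id ℝ ℂ).prod 0) z :=
  (hasFDerivAt_id z).prodMk (hasFDerivAt_const 0 z)

noncomputable def holderCoeff (k : ℕ) (w : ℂ × ℂ) : ℝ :=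
  k * max w.2.re 0 ^ (((k : ℝ) - 1) / k)

noncomputable def holderJ (k : ℕ) (w : ℂ × ℂ) : ℂ × ℂ →L[ℝ] ℂ × ℂ :=
  shearedJ (holderCoeff k w)

lemma norm_holderJ_sub_le {k : ℕ} (hk : 1 ≤ k) (w w' : ℂ × ℂ) :
    ‖holderJ k w - holderJ k w'‖ ≤ k * ‖w - w'‖ ^ (((k : ℝ) - 1) / k) := by
  set α : ℝ := ((k : ℝ) - 1) / k
  have hk' : (1 : ℝ) ≤ k := by exact_mod_cast hk
  have hα₀ : 0 ≤ α := div_nonneg (by linarith) (by linarith)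
  have hα₁ : α ≤ 1 := div_le_one_of_le₀ (by linarith) (by linarith)
  calc ‖holderJ k w - holderJ k w'‖ ≤ |holderCoeff k w - holderCoeff k w'| :=
        norm_shearedJ_sub_le _ _
    _ = k * |max w.2.re 0 ^ α - max w'.2.re 0 ^ α| := by
        rw [holderCoeff, holderCoeff, ← mul_sub, abs_mul, Nat.abs_cast]
    _ ≤ k * |max w.2.re 0 - max w'.2.re 0| ^ α := by
        gcongr
        exact abs_rpow_sub_rpow_le (le_max_right _ _) (le_max_right _ _) hα₀ hα₁
    _ ≤ k * ‖w - w'‖ ^ α := by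
        gcongr
        calc |max w.2.re 0 - max w'.2.re 0| ≤ |(w - w').2.re| := abs_max_sub_max_le_abs _ _ _
          _ ≤ ‖(w - w').2‖ := abs_re_le_norm _
          _ ≤ ‖w - w'‖ := norm_snd_le _

lemma holderCoeff_vmap {k : ℕ} (hk : k ≠ 0) (z : ℂ) :
    holderCoeff k (vmap k z) = k * max z.im 0 ^ (k - 1) := by
  have hm : 0 ≤ max z.im 0 := le_max_right _ _
  have hexp : (k : ℝ) * (((k : ℝ) - 1) / k) = ((k - 1 : ℕ) : ℝ) := by
    rw [Nat.cast_sub (by omega), Nat.cast_one]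
    field_simp
  rw [holderCoeff, vmap_eq hk, ofReal_re, max_eq_left (pow_nonneg hm k), ← Real.rpow_natCast,
    ← Real.rpow_mul hm, hexp, Real.rpow_natCast]

lemma holderCoeff_umap {k : ℕ} (hk : 1 < k) (z : ℂ) : holderCoeff k (umap z) = 0 := by
  have hα : ((k : ℝ) - 1) / k ≠ 0 := by
    have hk' : (1 : ℝ) < k := by exact_mod_cast hk
    exact div_ne_zero (by linarith) (by linarith)
  simp [holderCoeff, umap, Real.zero_rpow hα]

lemma fderiv_vmap_I {k : ℕ} (hk : 1 < k) (z : ℂ) :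
    fderiv ℝ (vmap k) z I = holderJ k (vmap k z) (fderiv ℝ (vmap k) z 1) := by
  rw [(hasFDerivAt_vmap hk z).fderiv, holderJ, shearedJ_apply, holderCoeff_vmap (by omega)]
  simp

lemma fderiv_umap_I {k : ℕ} (hk : 1 < k) (z : ℂ) :
    fderiv ℝ umap z I = holderJ k (umap z) (fderiv ℝ umap z 1) := by
  rw [(hasFDerivAt_umap z).fderiv, holderJ, shearedJ_apply, holderCoeff_umap hk]
  simp

/-- for every `k ≥ 2` there is an almost complex structure `J` on `ℂ²`,
Hölder continuous with exponent `(k-1)/k`, making both `u(z) = (z,0)` and the map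
`v` (which equals `u` for `Im z ≤ 0` and `(z, (Im z)^k)` for `Im z > 0`)
`J`-holomorphic; `u` and `v` agree on the nonempty open set `{Im z < 0}`, yet `u ≠ v`. -/
theorem holder_nonuniqueness (k : ℕ) (hk : 2 ≤ k) :
    ∃ (J : ℂ × ℂ → (ℂ × ℂ →L[ℝ] ℂ × ℂ)) (K : ℝ), 0 < K ∧
      (∀ p q : ℂ × ℂ, ‖J p - J q‖ ≤ K * ‖p - q‖ ^ (((k : ℝ) - 1) / k)) ∧
      (∀ p x, J p (J p x) = -x) ∧
      (∀ z ∈ ball (0 : ℂ) 1,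
        fderiv ℝ umap z Complex.I = J (umap z) (fderiv ℝ umap z 1)) ∧
      (∀ z ∈ ball (0 : ℂ) 1,
        fderiv ℝ (vmap k) z Complex.I = J (vmap k z) (fderiv ℝ (vmap k) z 1)) ∧
      (∀ z ∈ ball (0 : ℂ) 1, z.im < 0 → umap z = vmap k z) ∧
      (∃ z ∈ ball (0 : ℂ) 1, umap z ≠ vmap k z) := by
  refine ⟨holderJ k, k, by positivity, norm_holderJ_sub_le (by omega),
    fun w => shearedJ_shearedJ _, fun z _ => fderiv_umap_I hk z, fun z _ => fderiv_vmap_I hk z,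
    fun z _ hz => by simp [umap, vmap, hz.le], I / 2, by norm_num, ?_⟩
  simpa [umap, vmap] using (pow_ne_zero k two_ne_zero).symm
end

section
/- Let u : D → ℂⁿ be a C¹ map satisfying ‖∂u/∂z̄(z)‖ ≤ C·‖u(z)‖ for all z ∈ D and some constant C > 0. Then there exists a measurable map A : D → (n×n complex matrices) with operator norm ‖A(z)‖ ≤ C for every z ∈ D, such that ∂u/∂z̄(z) + A(z)·u(z) = 0 for every z ∈ D. -/
/-!
Where `u z ≠ 0` take `A z = -(∂u/∂z̄)(z) u(z)* / ‖u(z)‖²`, the matrix of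
`x ↦ -(⟪u z, x⟫ / ‖u z‖²) • ∂u/∂z̄(z)`: it sends `u z` to `-∂u/∂z̄(z)` and, being rank one, has
operator norm `‖∂u/∂z̄(z)‖ / ‖u z‖ ≤ C`. Where `u z = 0` the inequality forces `∂u/∂z̄(z) = 0`, and
the same formula gives `A z = 0` because `0⁻¹ = 0`. The entries of `A` are built from `fderiv`, which
is always Borel measurable, and from `u`, which is continuous on the disc.
-/

open Complex MeasureTheory Metric Filter Topology

open InnerProductSpace

section
variable {𝕜 E F : Type*} [RCLike 𝕜] [NormedAddCommGroup E] [InnerProductSpace 𝕜 E]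
  [NormedAddCommGroup F] [InnerProductSpace 𝕜 F]

variable (𝕜) in
/-- The operator `x ↦ (⟪v, x⟫ / ‖v‖²) • w`, of least norm among those sending `v` to `w`. -/
noncomputable def rankOneQuot (w : F) (v : E) : E →L[𝕜] F := ((‖v‖ : 𝕜) ^ 2)⁻¹ • rankOne 𝕜 w v

theorem rankOneQuot_apply_self (w : F) {v : E} (hv : v ≠ 0) : rankOneQuot 𝕜 w v v = w := by
  have : (‖v‖ : 𝕜) ≠ 0 := by simpa using hv
  simp [rankOneQuot, inner_self_eq_norm_sq_to_K, smul_smul, this]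

theorem norm_rankOneQuot (w : F) (v : E) : ‖(rankOneQuot 𝕜 w v : E →L[𝕜] F)‖ = ‖w‖ / ‖v‖ := by
  rw [rankOneQuot, norm_smul, norm_rankOne, norm_inv, norm_pow, RCLike.norm_ofReal, abs_norm]
  rcases eq_or_ne ‖v‖ 0 with h | h
  · simp [h]
  · field_simp

theorem rankOneQuot_apply_self_of_norm_le {w : F} {v : E} {C : ℝ} (h : ‖w‖ ≤ C * ‖v‖) :
    rankOneQuot 𝕜 w v v = w := by
  rcases eq_or_ne v 0 with rfl | hv
  · simp_all
  · exact rankOneQuot_apply_self w hv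

theorem norm_rankOneQuot_le {w : F} {v : E} {C : ℝ} (hC : 0 ≤ C) (h : ‖w‖ ≤ C * ‖v‖) :
    ‖(rankOneQuot 𝕜 w v : E →L[𝕜] F)‖ ≤ C := by
  rw [norm_rankOneQuot]
  exact div_le_of_le_mul₀ (norm_nonneg _) hC h
end

section
variable {𝕜 ι : Type*} [RCLike 𝕜] [Fintype ι] [DecidableEq ι]

theorem Matrix.toEuclideanCLM_symm_rankOneQuot (w v : EuclideanSpace 𝕜 ι) :
    (Matrix.toEuclideanCLM (𝕜 := 𝕜) (n := ι)).symm (rankOneQuot 𝕜 w v) =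
      ((‖v‖ : 𝕜) ^ 2)⁻¹ • Matrix.vecMulVec w (star v) := by
  rw [rankOneQuot, map_smul, ← symm_toEuclideanLin_rankOne]
  rfl

theorem Measurable.toEuclideanCLM_symm_rankOneQuot {α : Type*} [MeasurableSpace α]
    {w v : α → EuclideanSpace 𝕜 ι} (hw : Measurable w) (hv : Measurable v) :
    Measurable fun a i j =>
      (Matrix.toEuclideanCLM (𝕜 := 𝕜) (n := ι)).symm (rankOneQuot 𝕜 (w a) (v a)) i j := by
  simp only [Matrix.toEuclideanCLM_symm_rankOneQuot, Matrix.smul_apply, Matrix.vecMulVec_apply,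
    Pi.star_apply, smul_eq_mul]
  have hcoord : ∀ i, Continuous fun x : EuclideanSpace 𝕜 ι => x i := fun i =>
    (EuclideanSpace.proj i).continuous
  refine measurable_pi_lambda _ fun i => measurable_pi_lambda _ fun j => ?_
  exact (((RCLike.continuous_ofReal.measurable.comp hv.norm).pow_const 2).inv).mul
    (((hcoord i).measurable.comp hw).mul
      (continuous_star.measurable.comp ((hcoord j).measurable.comp hv)))
end

theorem measurable_dbar {E : Type*} [NormedAddCommGroup E] [NormedSpace ℂ E] [CompleteSpace E]
    [MeasurableSpace E] [BorelSpace E] (u : ℂ → E) : Measurable (dbar u) := by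
  have hL : Continuous fun L : ℂ →L[ℝ] E => (2⁻¹ : ℝ) • (L 1 + I • L I) := by fun_prop
  exact hL.measurable.comp (measurable_fderiv ℝ u)

/-- if `u : D → ℂⁿ` is `C¹` and `‖∂u/∂z̄‖ ≤ C·‖u‖` on `D` for some
`C > 0`, then there is a measurable matrix-valued map `A : D → Mat_{n×n}(ℂ)` with
operator norm `‖A(z)‖ ≤ C` on `D`, such that `∂u/∂z̄(z) + A(z)·u(z) = 0` on `D`. -/
theorem matrix_division (n : ℕ)
    (u : ℂ → EuclideanSpace ℂ (Fin n))
    (hu : ContDiffOn ℝ 1 u (ball (0 : ℂ) 1))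
    (C : ℝ) (hC : 0 < C)
    (hineq : ∀ z ∈ ball (0 : ℂ) 1, ‖dbar u z‖ ≤ C * ‖u z‖) :
    ∃ A : ℂ → Matrix (Fin n) (Fin n) ℂ,
      Measurable (fun z i j => A z i j) ∧
      (∀ z ∈ ball (0 : ℂ) 1, ‖Matrix.toEuclideanCLM (𝕜 := ℂ) (A z)‖ ≤ C) ∧
      (∀ z ∈ ball (0 : ℂ) 1,
        dbar u z + Matrix.toEuclideanCLM (𝕜 := ℂ) (A z) (u z) = 0) := by
  classical
  -- `u` is only known to be measurable on the disc, so we divide by its extension by zero.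
  set v := (ball (0 : ℂ) 1).piecewise u 0
  have hv : Measurable v :=
    hu.continuousOn.measurable_piecewise continuousOn_const measurableSet_ball
  have hvu : ∀ z ∈ ball (0 : ℂ) 1, v z = u z := fun z hz => Set.piecewise_eq_of_mem _ _ _ hz
  refine ⟨fun z => -(Matrix.toEuclideanCLM (𝕜 := ℂ) (n := Fin n)).symm
    (rankOneQuot ℂ (dbar u z) (v z)), ?_, fun z hz => ?_, fun z hz => ?_⟩
  · exact ((measurable_dbar u).toEuclideanCLM_symm_rankOneQuot hv).neg
  · rw [map_neg, StarAlgEquiv.apply_symm_apply, norm_neg, hvu z hz]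
    exact norm_rankOneQuot_le hC.le (hineq z hz)
  · rw [map_neg, StarAlgEquiv.apply_symm_apply, neg_apply, hvu z hz,
      rankOneQuot_apply_self_of_norm_le (hineq z hz), add_neg_cancel]
end
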